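/- arXiv:1907.13578 — 2 statements merged into one kernel-verified Lean document; each statement's English description precedes it below -/
import Mathlib

section
/- Let 𝔅 be a bornology with closed base on a metric space X. Then X satisfies S₁(Γ_{𝔅ˢ}, Γ_{𝔅ˢ}) if and only if X satisfies S_fin(Γ_{𝔅ˢ}, Γ_{𝔅ˢ}). -/
/-!
`S₁ ⇒ S_fin` is trivial. Conversely, discard `X` from each cover and enumerate `𝒰ₙ` without
repetitions as `j ↦ e n j`. The diagonal intersections `Wₙ(j) = ⋂_{i ≤ n} e i j` again form
`γ_{𝔅ˢ}`-covers, so `S_fin` yields finite `𝒢ₙ ⊆ {Wₙ(j)}` with `⋃ₙ 𝒢ₙ` a `γ_{𝔅ˢ}`-cover. For each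
`i` pick `Vᵢ ∈ ⋃ₙ 𝒢ₙ` outside `⋃_{n < i} 𝒢ₙ`: then `Vᵢ = W_m(j)` with `m ≥ i`, so `Vᵢ ⊆ e i j`,
and `i ↦ Vᵢ` has finite fibres, hence each `B ∈ 𝔅` has `B^δ ⊆ Vᵢ ⊆ e i j` for almost all `i`.
Such a sequence of open proper subsets always has a `γ_{𝔅ˢ}`-cover as range: a member repeated
infinitely often would contain an enlargement of every `B ∈ 𝔅`, hence be all of `X`.
-/

open Set Metric Filter

/-- A bornology on a metric space: an ideal of subsets covering `X`. -/
structure BornologyOn (X : Type*) [MetricSpace X] where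
  sets : Set (Set X)
  union_mem : ∀ {A B : Set X}, A ∈ sets → B ∈ sets → A ∪ B ∈ sets
  subset_mem : ∀ {A B : Set X}, A ∈ sets → B ⊆ A → B ∈ sets
  covers : ∀ x : X, ∃ A ∈ sets, x ∈ A

variable {X : Type*} [MetricSpace X]

/-- `𝔅` has a closed base: a cofinal subfamily consisting of closed sets. -/
def HasClosedBase (𝔅 : BornologyOn X) : Prop :=
  ∃ base ⊆ 𝔅.sets, (∀ C ∈ base, IsClosed C) ∧ ∀ A ∈ 𝔅.sets, ∃ C ∈ base, A ⊆ C

/-- The `δ`-enlargement `B^δ = ⋃_{x ∈ B} S(x, δ)`. -/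
def enlarge (B : Set X) (δ : ℝ) : Set X := ⋃ x ∈ B, ball x δ

/-- A `𝔅ˢ`-cover: `X ∉ 𝒰` and every `B ∈ 𝔅` has `B^δ ⊆ U` for some `U ∈ 𝒰`, `δ > 0`. -/
def IsBCover (𝔅 : BornologyOn X) (𝒰 : Set (Set X)) : Prop :=
  univ ∉ 𝒰 ∧ ∀ B ∈ 𝔅.sets, ∃ U ∈ 𝒰, ∃ δ > 0, enlarge B δ ⊆ U

/-- An open `𝔅ˢ`-cover. -/
def IsOpenBCover (𝔅 : BornologyOn X) (𝒰 : Set (Set X)) : Prop :=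
  (∀ U ∈ 𝒰, IsOpen U) ∧ (∀ x : X, ∃ U ∈ 𝒰, x ∈ U) ∧ IsBCover 𝔅 𝒰

/-- A `γ_{𝔅ˢ}`-cover (set form): infinite family of open sets such that for each `B ∈ 𝔅`
all but finitely many members contain some enlargement of `B`. -/
def IsGammaBCover (𝔅 : BornologyOn X) (𝒰 : Set (Set X)) : Prop :=
  𝒰.Infinite ∧ (∀ U ∈ 𝒰, IsOpen U) ∧
    ∀ B ∈ 𝔅.sets, {U ∈ 𝒰 | ¬ ∃ δ > 0, enlarge B δ ⊆ U}.Finite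

/-- A `γ_{𝔅ˢ}`-cover given as a sequence `{Uₙ}`: infinite, open, and for each `B ∈ 𝔅`
there are `n₀` and `δₙ > 0` with `B^{δₙ} ⊆ Uₙ` for all `n ≥ n₀`. -/
def IsGammaBSeq (𝔅 : BornologyOn X) (U : ℕ → Set X) : Prop :=
  (Set.range U).Infinite ∧ (∀ n, IsOpen (U n)) ∧
    ∀ B ∈ 𝔅.sets, ∃ n₀, ∀ n ≥ n₀, ∃ δ > 0, enlarge B δ ⊆ U n

/-- A `γ`-cover: infinite family of open sets, every point in all but finitely many members. -/
def IsGammaCover (𝒰 : Set (Set X)) : Prop :=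
  𝒰.Infinite ∧ (∀ U ∈ 𝒰, IsOpen U) ∧ ∀ x : X, {U ∈ 𝒰 | x ∉ U}.Finite

/-- An open cover of `X`. -/
def IsOpenCover (𝒰 : Set (Set X)) : Prop :=
  (∀ U ∈ 𝒰, IsOpen U) ∧ ∀ x : X, ∃ U ∈ 𝒰, x ∈ U

/-- The family `𝒪_{𝔅ˢ}` of countable open `𝔅ˢ`-covers. -/
def OBs (𝔅 : BornologyOn X) : Set (Set (Set X)) :=
  {𝒰 | 𝒰.Countable ∧ IsOpenBCover 𝔅 𝒰}

/-- The family `Γ_{𝔅ˢ}` of countable `γ_{𝔅ˢ}`-covers. -/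
def GBs (𝔅 : BornologyOn X) : Set (Set (Set X)) :=
  {𝒰 | 𝒰.Countable ∧ IsGammaBCover 𝔅 𝒰}

/-- The family `𝒪` of countable open covers. -/
def Ocov (X : Type*) [MetricSpace X] : Set (Set (Set X)) :=
  {𝒰 | 𝒰.Countable ∧ IsOpenCover 𝒰}

/-- The selection principle `S₁(𝒜, ℬ)`. -/
def S1 (𝒜 ℬ : Set (Set (Set X))) : Prop :=
  ∀ 𝒰 : ℕ → Set (Set X), (∀ n, 𝒰 n ∈ 𝒜) →
    ∃ sel : ℕ → Set X, (∀ n, sel n ∈ 𝒰 n) ∧ Set.range sel ∈ ℬ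

/-- The selection principle `S_fin(𝒜, ℬ)`. -/
def Sfin (𝒜 ℬ : Set (Set (Set X))) : Prop :=
  ∀ 𝒰 : ℕ → Set (Set X), (∀ n, 𝒰 n ∈ 𝒜) →
    ∃ 𝒱 : ℕ → Set (Set X), (∀ n, 𝒱 n ⊆ 𝒰 n ∧ (𝒱 n).Finite) ∧ (⋃ n, 𝒱 n) ∈ ℬ

/-- The selection principle `U_fin(𝒜, ℬ)`. -/
def Ufin (𝒜 ℬ : Set (Set (Set X))) : Prop :=
  ∀ 𝒰 : ℕ → Set (Set X), (∀ n, 𝒰 n ∈ 𝒜) →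
    ∃ 𝒱 : ℕ → Set (Set X), (∀ n, 𝒱 n ⊆ 𝒰 n ∧ (𝒱 n).Finite) ∧
      ((Set.range fun n => ⋃₀ 𝒱 n) ∈ ℬ ∨ ∃ n, ⋃₀ 𝒱 n = univ)

/-- ONE has a winning strategy in `G₁(𝒜, ℬ)`. -/
def OneWinsG1 (𝒜 ℬ : Set (Set (Set X))) : Prop :=
  ∃ σ : List (Set X) → Set (Set X),
    (∀ h, σ h ∈ 𝒜) ∧
    ∀ play : ℕ → Set X,
      (∀ n, play n ∈ σ (List.ofFn fun i : Fin n => play i.1)) →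
      Set.range play ∉ ℬ

/-- ONE has a winning strategy in `G_fin(𝒜, ℬ)`. -/
def OneWinsGfin (𝒜 ℬ : Set (Set (Set X))) : Prop :=
  ∃ σ : List (Set (Set X)) → Set (Set X),
    (∀ h, σ h ∈ 𝒜) ∧
    ∀ play : ℕ → Set (Set X),
      (∀ n, play n ⊆ σ (List.ofFn fun i : Fin n => play i.1) ∧ (play n).Finite) →
      (⋃ n, play n) ∉ ℬ

/-- The winning condition in the `𝔅ˢ`-Hurewicz game / property: every `B ∈ 𝔅` is
eventually `δ`-enlarged into some member of `𝒱ₙ`. -/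
def HurSel (𝔅 : BornologyOn X) (𝒱 : ℕ → Set (Set X)) : Prop :=
  ∀ B ∈ 𝔅.sets, ∃ n₀, ∀ n ≥ n₀, ∃ δ > 0, ∃ U ∈ 𝒱 n, enlarge B δ ⊆ U

/-- The strong `𝔅`-Hurewicz property. -/
def BsHurewicz (𝔅 : BornologyOn X) : Prop :=
  ∀ 𝒰 : ℕ → Set (Set X), (∀ n, 𝒰 n ∈ OBs 𝔅) →
    ∃ 𝒱 : ℕ → Set (Set X), (∀ n, 𝒱 n ⊆ 𝒰 n ∧ (𝒱 n).Finite) ∧ HurSel 𝔅 𝒱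

/-- ONE has a winning strategy in the `𝔅ˢ`-Hurewicz game. -/
def OneWinsHurewicz (𝔅 : BornologyOn X) : Prop :=
  ∃ σ : List (Set (Set X)) → Set (Set X),
    (∀ h, σ h ∈ OBs 𝔅) ∧
    ∀ play : ℕ → Set (Set X),
      (∀ n, play n ⊆ σ (List.ofFn fun i : Fin n => play i.1) ∧ (play n).Finite) →
      ¬ HurSel 𝔅 play

/-- A `𝔅ˢ`-groupable cover. -/
def BsGroupable (𝔅 : BornologyOn X) (𝒰 : Set (Set X)) : Prop :=
  ∃ 𝒢 : ℕ → Set (Set X), (∀ n, (𝒢 n).Finite) ∧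
    (∀ m n, m ≠ n → Disjoint (𝒢 m) (𝒢 n)) ∧ (⋃ n, 𝒢 n) = 𝒰 ∧ HurSel 𝔅 𝒢

/-- The family `𝒪_{𝔅ˢ}^{gp}` of `𝔅ˢ`-groupable open covers. -/
def OBsgp (𝔅 : BornologyOn X) : Set (Set (Set X)) :=
  {𝒰 | IsOpenCover 𝒰 ∧ BsGroupable 𝔅 𝒰}

/-- The basic `τ_𝔅ˢ` neighbourhood `[B, ε]ˢ(f)` in `C(X)`. -/
def sball (f : C(X, ℝ)) (B : Set X) (ε : ℝ) : Set C(X, ℝ) :=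
  {g | ∃ δ > 0, ∀ x ∈ enlarge B δ, |f x - g x| < ε}

/-- The topology `τ_𝔅ˢ` of strong uniform convergence on `𝔅` on `C(X)`. -/
def tauBs (𝔅 : BornologyOn X) : TopologicalSpace C(X, ℝ) :=
  TopologicalSpace.generateFrom
    {S | ∃ f : C(X, ℝ), ∃ B ∈ 𝔅.sets, ∃ ε > 0, S = sball f B ε}

/-- Countable `T`-tightness of a topological space. -/
def CountableTTightness {Y : Type*} (t : TopologicalSpace Y) : Prop :=
  ∀ ρ : Cardinal.{0}, ρ.IsRegular → Cardinal.aleph0 < ρ →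
    ∀ A : Ordinal.{0} → Set Y, (∀ α β, α ≤ β → A α ⊆ A β) →
      (∀ α, α < ρ.ord → @IsClosed _ t (A α)) →
      @IsClosed _ t (⋃ α ∈ {α | α < ρ.ord}, A α)


open Function

theorem enlarge_mono (B : Set X) {δ ε : ℝ} (h : δ ≤ ε) : enlarge B δ ⊆ enlarge B ε :=
  iUnion₂_mono fun _ _ => ball_subset_ball h

def uniformNhds (B : Set X) : Filter X where
  sets := {U | ∃ δ > 0, enlarge B δ ⊆ U}
  univ_sets := ⟨1, one_pos, subset_univ _⟩
  sets_of_superset := fun ⟨δ, hδ, hB⟩ hUV => ⟨δ, hδ, hB.trans hUV⟩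
  inter_sets := fun ⟨δ, hδ, hU⟩ ⟨ε, hε, hV⟩ =>
    ⟨min δ ε, lt_min hδ hε, subset_inter ((enlarge_mono B (min_le_left δ ε)).trans hU)
      ((enlarge_mono B (min_le_right δ ε)).trans hV)⟩

theorem subset_of_mem_uniformNhds {B U : Set X} (h : U ∈ uniformNhds B) : B ⊆ U := by
  obtain ⟨δ, hδ, hU⟩ := h
  exact fun x hx => hU (mem_biUnion hx (mem_ball_self hδ))

theorem eq_univ_of_forall_mem_uniformNhds (𝔅 : BornologyOn X) {U : Set X}
    (h : ∀ B ∈ 𝔅.sets, U ∈ uniformNhds B) : U = univ :=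
  eq_univ_of_forall fun x =>
    let ⟨B, hB, hx⟩ := 𝔅.covers x
    subset_of_mem_uniformNhds (h B hB) hx

theorem Set.Countable.exists_injective_range_eq {α : Type*} {s : Set α} (hc : s.Countable)
    (hi : s.Infinite) : ∃ e : ℕ → α, Injective e ∧ range e = s := by
  have := hc.to_subtype
  have := hi.to_subtype
  let _ := (nonempty_denumerable s).some
  refine ⟨(↑) ∘ (Denumerable.eqv s).symm, Subtype.val_injective.comp (Equiv.injective _), ?_⟩
  rw [range_comp, Equiv.range_eq_univ, image_univ, Subtype.range_coe]

section GammaCovers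

variable {𝔅 : BornologyOn X}

theorem diff_univ_mem_GBs {𝒰 : Set (Set X)} (h : 𝒰 ∈ GBs 𝔅) : 𝒰 \ {univ} ∈ GBs 𝔅 := by
  obtain ⟨hc, hinf, hopen, hbad⟩ := h
  exact ⟨hc.mono sdiff_subset, hinf.sdiff (finite_singleton _), fun U hU => hopen U hU.1,
    fun B hB => (hbad B hB).subset fun U hU => ⟨hU.1.1, hU.2⟩⟩

theorem eventually_mem_uniformNhds {ι : Type*} {𝒰 : Set (Set X)} (h𝒰 : 𝒰 ∈ GBs 𝔅)
    {U : ι → Set X} (hU : Tendsto U cofinite cofinite) (hmem : ∀ i, U i ∈ 𝒰) {B : Set X}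
    (hB : B ∈ 𝔅.sets) : ∀ᶠ i in cofinite, U i ∈ uniformNhds B :=
  (hU.eventually (h𝒰.2.2.2 B hB).eventually_cofinite_notMem).mono fun i hi =>
    by_contra fun hbad => hi ⟨hmem i, hbad⟩

theorem range_mem_GBs {ι : Type*} [Countable ι] [Infinite ι] {U : ι → Set X}
    (hopen : ∀ i, IsOpen (U i)) (hne : ∀ i, U i ≠ univ)
    (hgood : ∀ B ∈ 𝔅.sets, ∀ᶠ i in cofinite, U i ∈ uniformNhds B) : range U ∈ GBs 𝔅 := by
  refine ⟨countable_range U, fun hfin => ?_, forall_mem_range.2 hopen, fun B hB => ?_⟩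
  · have := hfin.to_subtype
    obtain ⟨⟨V, hV⟩, hfibre⟩ := Finite.exists_infinite_fiber (rangeFactorization U)
    have hfreq : ∃ᶠ i in cofinite, U i = V := by
      refine frequently_cofinite_iff_infinite.2 (infinite_coe_iff.1 ?_)
      convert hfibre using 2
      ext i
      simp only [mem_ofPred_eq, mem_preimage, mem_singleton_iff, Subtype.ext_iff,
        rangeFactorization_coe]
    have hVuniv : V = univ := eq_univ_of_forall_mem_uniformNhds 𝔅 fun B hB => by
      obtain ⟨i, hi, rfl⟩ := ((hgood B hB).and_frequently hfreq).exists
      exact hi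
    obtain ⟨i, rfl⟩ := hV
    exact hne i hVuniv
  · refine ((eventually_cofinite.1 (hgood B hB)).image U).subset ?_
    rintro _ ⟨⟨i, rfl⟩, hbad⟩
    exact mem_image_of_mem U hbad

theorem range_biInter_Iic_mem_GBs {e : ℕ → ℕ → Set X} (he : ∀ i, Injective (e i))
    (hmem : ∀ i, range (e i) ∈ GBs 𝔅) (hne : ∀ j, e 0 j ≠ univ) (n : ℕ) :
    range (fun j => ⋂ i ∈ Iic n, e i j) ∈ GBs 𝔅 := by
  refine range_mem_GBs (fun j => (finite_Iic n).isOpen_biInter fun i _ =>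
    (hmem i).2.2.1 _ (mem_range_self j)) (fun j hj => hne j ?_) fun B hB => ?_
  · exact eq_univ_of_univ_subset (hj ▸ biInter_subset_of_mem (Nat.zero_le n))
  · refine ((finite_Iic n).eventually_all.2 fun i _ => ?_).mono fun j hj =>
      (biInter_mem (finite_Iic n)).2 hj
    exact eventually_mem_uniformNhds (hmem i) (he i).tendsto_cofinite mem_range_self hB

end GammaCovers

theorem exists_late_selection {α : Type*} {𝒢 : ℕ → Set α} (hfin : ∀ n, (𝒢 n).Finite)
    (hinf : (⋃ n, 𝒢 n).Infinite) :
    ∃ (m : ℕ → ℕ) (V : ℕ → α), (∀ i, i ≤ m i ∧ V i ∈ 𝒢 (m i)) ∧ Tendsto V cofinite cofinite := by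
  have hnew : ∀ i, ∃ v ∈ ⋃ n, 𝒢 n, v ∉ ⋃ n ∈ Iio i, 𝒢 n := fun i =>
    (hinf.sdiff ((finite_Iio i).biUnion fun n _ => hfin n)).nonempty
  choose V hV hVnew using hnew
  have hlate : ∀ {i n}, V i ∈ 𝒢 n → i ≤ n := fun {i n} hn =>
    not_lt.1 fun hlt => hVnew i (mem_biUnion hlt hn)
  choose m hm using fun i => mem_iUnion.1 (hV i)
  refine ⟨m, V, fun i => ⟨hlate (hm i), hm i⟩,
    Tendsto.cofinite_of_finite_preimage_singleton fun v => ?_⟩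
  rcases (V ⁻¹' {v}).eq_empty_or_nonempty with hempty | ⟨i₀, rfl : V i₀ = v⟩
  · rw [hempty]
    exact Finite.of_subsingleton
  · exact ((finite_Iic (m i₀)).subset fun i (hi : V i = V i₀) => hlate (hi ▸ hm i₀)).to_subtype

theorem Sfin_of_S1 {Y : Type*} {𝒜 ℬ : Set (Set (Set Y))} (h : S1 𝒜 ℬ) : Sfin 𝒜 ℬ := fun 𝒰 h𝒰 => by
  obtain ⟨sel, hsel, hrange⟩ := h 𝒰 h𝒰
  refine ⟨fun n => {sel n}, fun n => ⟨singleton_subset_iff.2 (hsel n), finite_singleton _⟩, ?_⟩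
  rwa [iUnion_singleton_eq_range]

theorem S1_GBs_of_Sfin {𝔅 : BornologyOn X} (h : Sfin (GBs 𝔅) (GBs 𝔅)) : S1 (GBs 𝔅) (GBs 𝔅) := by
  intro 𝒰 h𝒰
  have h𝒰' n := diff_univ_mem_GBs (h𝒰 n)
  choose e he hrange using fun n => (h𝒰' n).1.exists_injective_range_eq (h𝒰' n).2.1
  have hmem i j : e i j ∈ 𝒰 i \ {univ} := hrange i ▸ mem_range_self j
  set W : ℕ → ℕ → Set X := fun n j => ⋂ i ∈ Iic n, e i j
  obtain ⟨𝒢, h𝒢, hG⟩ := h (fun n => range (W n)) fun n =>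
    range_biInter_Iic_mem_GBs he (fun i => hrange i ▸ h𝒰' i) (fun j => (hmem 0 j).2) n
  obtain ⟨m, V, hmV, hV⟩ := exists_late_selection (fun n => (h𝒢 n).2) hG.2.1
  choose j hj using fun i => (h𝒢 (m i)).1 (hmV i).2
  have hVsub i : V i ⊆ e i (j i) := hj i ▸ biInter_subset_of_mem (hmV i).1
  refine ⟨fun i => e i (j i), fun i => (hmem i _).1, range_mem_GBs
    (fun i => (h𝒰' i).2.2.1 _ (hmem i _)) (fun i => (hmem i _).2) fun B hB => ?_⟩
  exact (eventually_mem_uniformNhds hG hV (fun i => mem_iUnion.2 ⟨m i, (hmV i).2⟩) hB).mono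
    fun i hi => mem_of_superset hi (hVsub i)

theorem stmt6_general (𝔅 : BornologyOn X) :
    S1 (GBs 𝔅) (GBs 𝔅) ↔ Sfin (GBs 𝔅) (GBs 𝔅) :=
  ⟨Sfin_of_S1, S1_GBs_of_Sfin⟩

theorem stmt6 (𝔅 : BornologyOn X) (hcb : HasClosedBase 𝔅) :
    S1 (GBs 𝔅) (GBs 𝔅) ↔ Sfin (GBs 𝔅) (GBs 𝔅) :=
  stmt6_general 𝔅
end

section
/- Let 𝔅 be a bornology with closed base on a metric space X. Then X satisfies S_fin(Γ_{𝔅ˢ}, 𝒪) if and only if X satisfies U_fin(𝒪_{𝔅ˢ}, 𝒪), where 𝒪 is the family of countable open covers of X. -/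
open Set Metric Filter

variable {X : Type*} [MetricSpace X]

/-!
An open `𝔅ˢ`-cover `{Uₖ}` of `X` without finite subcover yields the `γ_{𝔅ˢ}`-cover of its partial
unions `U₀ ∪ ⋯ ∪ Uₖ`. Finitely many partial unions lie in a single one, so an `S_fin`-selection
from these `γ_{𝔅ˢ}`-covers is a `U_fin`-selection from the original covers. Conversely, a
`γ_{𝔅ˢ}`-cover not containing `X` is an open `𝔅ˢ`-cover, and a `U_fin`-selection for `𝒪` is
also an `S_fin`-selection for `𝒪`.
-/

lemma Monotone.exists_forall_le_of_finite_range {ι β : Type*} [LinearOrder ι] [Nonempty ι]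
    [PartialOrder β] {f : ι → β} (hf : Monotone f) (hfin : (range f).Finite) :
    ∃ i, ∀ j, f j ≤ f i := by
  obtain ⟨_, ⟨i, rfl⟩, hmax⟩ := hfin.exists_maximal (range_nonempty f)
  refine ⟨i, fun j => ?_⟩
  rcases le_total j i with h | h
  · exact hf h
  · exact hmax ⟨j, rfl⟩ (hf h)

lemma exists_subset_accumulate_of_finite {α : Type*} {f : ℕ → Set α} {𝒲 : Set (Set α)}
    (h𝒲 : 𝒲.Finite) (h𝒲f : 𝒲 ⊆ range (accumulate f)) :
    ∃ K, ∀ W ∈ 𝒲, W ⊆ accumulate f K := by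
  rw [← image_univ] at h𝒲f
  obtain ⟨t, -, ht, rfl⟩ := h𝒲.exists_subset_finite_image_eq h𝒲f
  obtain ⟨K, hK⟩ := ht.bddAbove
  exact ⟨K, forall_mem_image.2 fun k hk => monotone_accumulate (hK hk)⟩

lemma sUnion_image_Iic_eq_accumulate {α : Type*} (f : ℕ → Set α) (k : ℕ) :
    ⋃₀ (f '' Iic k) = accumulate f k := by
  simp [sUnion_image, accumulate_def]

lemma exists_finite_subsets_single {α : Type*} (𝒰 : ℕ → Set α) {n₀ : ℕ} {F : Set α}
    (hF𝒰 : F ⊆ 𝒰 n₀) (hF : F.Finite) :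
    ∃ 𝒱 : ℕ → Set α, (∀ n, 𝒱 n ⊆ 𝒰 n ∧ (𝒱 n).Finite) ∧ 𝒱 n₀ = F ∧ ⋃ n, 𝒱 n = F := by
  refine ⟨fun n => if n = n₀ then F else ∅, fun n => ?_, if_pos rfl, by ext; simp⟩
  by_cases h : n = n₀
  · subst h
    simpa using ⟨hF𝒰, hF⟩
  · simp [h]

lemma mem_Ocov_iff {𝒰 : Set (Set X)} :
    𝒰 ∈ Ocov X ↔ 𝒰.Countable ∧ (∀ U ∈ 𝒰, IsOpen U) ∧ ⋃₀ 𝒰 = univ := by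
  simp only [Ocov, IsOpenCover, mem_ofPred_eq, eq_univ_iff_forall, mem_sUnion]

lemma subset_enlarge (B : Set X) {δ : ℝ} (hδ : 0 < δ) : B ⊆ enlarge B δ :=
  fun _ hx => mem_biUnion hx (mem_ball_self hδ)

lemma sUnion_eq_univ_of_enlarge_subset (𝔅 : BornologyOn X) {𝒰 : Set (Set X)}
    (h𝒰 : ∀ B ∈ 𝔅.sets, ∃ U ∈ 𝒰, ∃ δ > 0, enlarge B δ ⊆ U) : ⋃₀ 𝒰 = univ := by
  refine eq_univ_of_forall fun x => ?_
  obtain ⟨B, hB, hxB⟩ := 𝔅.covers x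
  obtain ⟨U, hU, δ, hδ, hBU⟩ := h𝒰 B hB
  exact ⟨U, hU, hBU (subset_enlarge B hδ hxB)⟩

lemma mem_OBs_of_mem_GBs {𝔅 : BornologyOn X} {𝒰 : Set (Set X)} (h𝒰 : 𝒰 ∈ GBs 𝔅)
    (huniv : univ ∉ 𝒰) : 𝒰 ∈ OBs 𝔅 := by
  obtain ⟨hc, hinf, hopen, hcofin⟩ := h𝒰
  have hB : ∀ B ∈ 𝔅.sets, ∃ U ∈ 𝒰, ∃ δ > 0, enlarge B δ ⊆ U := fun B hB => by
    obtain ⟨U, hU, hgood⟩ := (hinf.sdiff (hcofin B hB)).nonempty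
    exact ⟨U, hU, not_not.1 fun hbad => hgood ⟨hU, hbad⟩⟩
  have hcov := sUnion_eq_univ_of_enlarge_subset 𝔅 hB
  exact ⟨hc, hopen, fun x => mem_sUnion.1 (hcov ▸ mem_univ x), huniv, hB⟩

lemma range_accumulate_mem_GBs {𝔅 : BornologyOn X} {f : ℕ → Set X} (hopen : ∀ n, IsOpen (f n))
    (hB : ∀ B ∈ 𝔅.sets, ∃ U ∈ range f, ∃ δ > 0, enlarge B δ ⊆ U)
    (hnot : ∀ k, accumulate f k ≠ univ) : range (accumulate f) ∈ GBs 𝔅 := by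
  refine ⟨countable_range _, fun hfin => ?_, ?_, fun B hB' => ?_⟩
  · obtain ⟨k, hk⟩ := monotone_accumulate.exists_forall_le_of_finite_range hfin
    refine hnot k (eq_univ_of_univ_subset ?_)
    rw [← sUnion_eq_univ_of_enlarge_subset 𝔅 hB, sUnion_range, ← iUnion_accumulate]
    exact iUnion_subset hk
  · rintro _ ⟨k, rfl⟩
    rw [accumulate_def]
    exact isOpen_biUnion fun j _ => hopen j
  · obtain ⟨_, ⟨k₀, rfl⟩, δ, hδ, hBU⟩ := hB B hB'
    refine ((finite_Iio k₀).image (accumulate f)).subset ?_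
    rintro _ ⟨⟨k, rfl⟩, hbad⟩
    refine ⟨k, mem_Iio.2 <| not_le.1 fun hk => hbad ⟨δ, hδ, ?_⟩, rfl⟩
    exact hBU.trans (subset_accumulate.trans (monotone_accumulate hk))

section

variable {𝔅 : BornologyOn X}

theorem ufin_OBs_Ocov_of_sfin_GBs_Ocov (hS : Sfin (GBs 𝔅) (Ocov X)) :
    Ufin (OBs 𝔅) (Ocov X) := by
  intro 𝒰 h𝒰
  by_cases hsub : ∃ n, ∃ F ⊆ 𝒰 n, F.Finite ∧ ⋃₀ F = univ
  · obtain ⟨n₀, F, hF𝒰, hF, hFcov⟩ := hsub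
    obtain ⟨𝒱, h𝒱, h𝒱n₀, -⟩ := exists_finite_subsets_single 𝒰 hF𝒰 hF
    exact ⟨𝒱, h𝒱, Or.inr ⟨n₀, h𝒱n₀ ▸ hFcov⟩⟩
  push Not at hsub
  have hopen : ∀ n, ∀ U ∈ 𝒰 n, IsOpen U := fun n => (h𝒰 n).2.1
  have hB : ∀ n, ∀ B ∈ 𝔅.sets, ∃ U ∈ 𝒰 n, ∃ δ > 0, enlarge B δ ⊆ U := fun n => (h𝒰 n).2.2.2.2
  have hne : ∀ n, (𝒰 n).Nonempty := fun n => nonempty_iff_ne_empty.2 fun h =>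
    hsub n ∅ (empty_subset _) finite_empty
      (by rw [← h]; exact sUnion_eq_univ_of_enlarge_subset 𝔅 (hB n))
  choose f hf using fun n => (h𝒰 n).1.exists_eq_range (hne n)
  have hfin : ∀ n k, f n '' Iic k ⊆ 𝒰 n ∧ (f n '' Iic k).Finite := fun n k =>
    ⟨hf n ▸ image_subset_range _ _, (finite_Iic k).image _⟩
  have hG : ∀ n, range (accumulate (f n)) ∈ GBs 𝔅 := fun n =>
    range_accumulate_mem_GBs (fun k => hopen n _ (hf n ▸ mem_range_self k)) (hf n ▸ hB n)
      (fun k hk => hsub n _ (hfin n k).1 (hfin n k).2 (by rwa [sUnion_image_Iic_eq_accumulate]))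
  obtain ⟨𝒲, h𝒲, h𝒲cov⟩ := hS _ hG
  choose K hK using fun n => exists_subset_accumulate_of_finite (h𝒲 n).2 (h𝒲 n).1
  refine ⟨fun n => f n '' Iic (K n), fun n => hfin n (K n), Or.inl ?_⟩
  simp only [sUnion_image_Iic_eq_accumulate]
  refine mem_Ocov_iff.2 ⟨countable_range _, ?_, eq_univ_of_univ_subset ?_⟩
  · rintro _ ⟨n, rfl⟩
    exact (hG n).2.2.1 _ (mem_range_self _)
  · rw [← (mem_Ocov_iff.1 h𝒲cov).2.2, sUnion_iUnion, sUnion_range]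
    exact iUnion_mono fun n => sUnion_subset (hK n)

theorem sfin_GBs_Ocov_of_ufin_OBs_Ocov (hU : Ufin (OBs 𝔅) (Ocov X)) :
    Sfin (GBs 𝔅) (Ocov X) := by
  intro 𝒰 h𝒰
  by_cases huniv : ∃ n, univ ∈ 𝒰 n
  · obtain ⟨n₀, hn₀⟩ := huniv
    obtain ⟨𝒱, h𝒱, -, h𝒱eq⟩ :=
      exists_finite_subsets_single 𝒰 (singleton_subset_iff.2 hn₀) (finite_singleton _)
    refine ⟨𝒱, h𝒱, h𝒱eq ▸ mem_Ocov_iff.2 ⟨countable_singleton _, ?_, sUnion_singleton _⟩⟩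
    exact fun U hU => hU ▸ isOpen_univ
  push Not at huniv
  have hopen : ∀ n, ∀ U ∈ 𝒰 n, IsOpen U := fun n => (h𝒰 n).2.2.1
  obtain ⟨𝒱, h𝒱, hcov | ⟨n₀, hn₀⟩⟩ := hU 𝒰 fun n => mem_OBs_of_mem_GBs (h𝒰 n) (huniv n)
  · refine ⟨𝒱, h𝒱, mem_Ocov_iff.2 ⟨countable_iUnion fun n => (h𝒱 n).2.countable, ?_, ?_⟩⟩
    · simp only [mem_iUnion]
      exact fun U ⟨n, hU⟩ => hopen n U ((h𝒱 n).1 hU)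
    · rw [sUnion_iUnion, ← sUnion_range]
      exact (mem_Ocov_iff.1 hcov).2.2
  · obtain ⟨𝒲, h𝒲, -, h𝒲eq⟩ := exists_finite_subsets_single 𝒰 (h𝒱 n₀).1 (h𝒱 n₀).2
    refine ⟨𝒲, h𝒲, h𝒲eq ▸ mem_Ocov_iff.2 ⟨(h𝒱 n₀).2.countable, ?_, hn₀⟩⟩
    exact fun U hU => hopen n₀ U ((h𝒱 n₀).1 hU)

end

theorem stmt8_general (𝔅 : BornologyOn X) :
    Sfin (GBs 𝔅) (Ocov X) ↔ Ufin (OBs 𝔅) (Ocov X) :=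
  ⟨ufin_OBs_Ocov_of_sfin_GBs_Ocov, sfin_GBs_Ocov_of_ufin_OBs_Ocov⟩

theorem stmt8 (𝔅 : BornologyOn X) (hcb : HasClosedBase 𝔅) :
    Sfin (GBs 𝔅) (Ocov X) ↔ Ufin (OBs 𝔅) (Ocov X) :=
  stmt8_general 𝔅
end
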